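/- Let X₁, …, Xₙ be independent random variables, each uniformly distributed on (0,1], let A = [a₁, …, aₙ] ∈ ℝ^{n×n} be an invertible matrix with columns a₁, …, aₙ, define (Y₁, …, Y_{n−1}, Z)ᵀ = A·(X₁, …, Xₙ)ᵀ, let g : ℝ^{n−1} → ℝ be a measurable function, and let ε > 0. Then the probability that Z ∈ [g(Y₁,…,Y_{n−1}), g(Y₁,…,Y_{n−1}) + ε] is at most 2nε / (δ(a₁,…,aₙ) · min_{k∈{1,…,n}} ‖a_k‖). -/

import Mathlib

open scoped RealInnerProductSpace BigOperators
open MeasureTheory ProbabilityTheory Matrix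

noncomputable section

/-- Identity map from plain vectors to Euclidean space (L2 norm). -/
def toE {n : ℕ} (x : Fin n → ℝ) : EuclideanSpace ℝ (Fin n) := WithLp.toLp 2 x

/-- Identity map from Euclidean space to plain vectors. -/
def ofE {n : ℕ} (x : EuclideanSpace ℝ (Fin n)) : Fin n → ℝ := x

/-- Normalization N(x) = x / ‖x‖. -/
def nrm {n : ℕ} (x : EuclideanSpace ℝ (Fin n)) : EuclideanSpace ℝ (Fin n) := ‖x‖⁻¹ • x

/-- δ̂(S, v): the norm of the projection of v onto the orthogonal complement of span S,
divided by ‖v‖ (the sine of the angle between v and span S). -/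
def deltaHat {n : ℕ} (S : Set (EuclideanSpace ℝ (Fin n))) (v : EuclideanSpace ℝ (Fin n)) : ℝ :=
  ‖(Submodule.orthogonalProjectionOnto ((Submodule.span ℝ S)ᗮ) v : EuclideanSpace ℝ (Fin n))‖ / ‖v‖

/-- δ(z₁, …, zₙ) = min over k of δ̂({z_i : i ≠ k}, z_k). -/
def deltaVec {n : ℕ} (z : Fin n → EuclideanSpace ℝ (Fin n)) : ℝ :=
  ⨅ k : Fin n, deltaHat (z '' {i | i ≠ k}) (z k)

/-- δ(A) for rows a₁, …, a_m: the minimum of δ over all choices of n linearly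
independent rows. -/
def deltaRows {m n : ℕ} (a : Fin m → EuclideanSpace ℝ (Fin n)) : ℝ :=
  sInf { d | ∃ f : Fin n → Fin m, LinearIndependent ℝ (a ∘ f) ∧ d = deltaVec (a ∘ f) }

/-- A vertex of the polyhedron {x : ∀ i, ⟪a i, x⟫ ≤ b i}. -/
def IsVertex {m n : ℕ} (a : Fin m → EuclideanSpace ℝ (Fin n)) (b : Fin m → ℝ)
    (z : EuclideanSpace ℝ (Fin n)) : Prop :=
  (∀ i, ⟪a i, z⟫ ≤ b i) ∧ Submodule.span ℝ (a '' {i | ⟪a i, z⟫ = b i}) = ⊤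

/-- Two distinct vertices are neighboring if n−1 linearly independent constraints are
tight at both. -/
def Neighboring {m n : ℕ} (a : Fin m → EuclideanSpace ℝ (Fin n)) (b : Fin m → ℝ)
    (z₁ z₂ : EuclideanSpace ℝ (Fin n)) : Prop :=
  IsVertex a b z₁ ∧ IsVertex a b z₂ ∧ z₁ ≠ z₂ ∧
    ∃ s : Finset (Fin m), s.card = n - 1 ∧
      LinearIndependent ℝ (fun i : s => a i) ∧
      ∀ i ∈ s, ⟪a i, z₁⟫ = b i ∧ ⟪a i, z₂⟫ = b i

/-- The largest absolute value of a sub-determinant of size k. -/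
def subdetSup {m n : ℕ} (A : Matrix (Fin m) (Fin n) ℝ) (k : ℕ) : ℝ :=
  ⨆ (f : Fin k → Fin m) (_ : Function.Injective f) (g : Fin k → Fin n)
    (_ : Function.Injective g), |(A.submatrix f g).det|

end

/-!
The event is `X ∈ A⁻¹ S`, where `S` is the strip of height `ε` above the graph of `g`. As `X` is
uniform on the unit cube `C`, its probability is at most `vol (A⁻¹ S ∩ C)`, which equals
`|det A|⁻¹ vol (S ∩ A C)`; by Fubini in the last coordinate, `vol (S ∩ A C) ≤ ε vol (π (A C))`,
where `π` forgets the last coordinate. The map `π ∘ A` kills `d = A⁻¹ eₙ`, so moving along `d`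
until the boundary of `C` is hit shows that `π (A C)` is covered by the images of the `2n` facets
`x_k ∈ {0, 1}`; by the cofactor formula each has volume `|det A| |d_k|`, so the probability is at
most `2 ε ∑ |d_k|`. Finally `∑ d_k a_k = eₙ`, and projecting onto the orthogonal complement of
the other columns gives `|d_k| δ̂_k ‖a_k‖ ≤ 1`, i.e. `|d_k| ≤ 1 / (δ · min ‖a_k‖)`.
-/

open Set Topology

theorem exists_add_smul_mem_face {ι : Type*} [Fintype ι] {x d : ι → ℝ}
    (hx : x ∈ Icc (0 : ι → ℝ) 1) (hd : d ≠ 0) :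
    ∃ t : ℝ, ∃ k, x + t • d ∈ Icc (0 : ι → ℝ) 1 ∧ (x + t • d) k ∈ ({0, 1} : Set ℝ) := by
  set T : Set ℝ := (fun t : ℝ => x + t • d) ⁻¹' Icc 0 1
  have hT : IsCompact T := by
    have hemb := LinearMap.isClosedEmbedding_of_injective (LinearMap.ker_toSpanSingleton ℝ hd)
    exact hemb.isCompact_preimage ((Homeomorph.addLeft x).isCompact_preimage.mpr isCompact_Icc)
  obtain ⟨t, htT, hmax⟩ := hT.exists_isMaxOn ⟨0, by simpa [T] using hx⟩ continuousOn_id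
  refine ⟨t, ?_⟩
  by_contra! hint
  have hmem : x + t • d ∈ univ.pi fun _ : ι => Ioo (0 : ℝ) 1 := fun k _ =>
    have h : (x + t • d) k ∈ Icc 0 1 := ⟨htT.1 k, htT.2 k⟩
    ⟨h.1.lt_of_ne fun h0 => hint k htT (by simp [← h0]),
      h.2.lt_of_ne fun h1 => hint k htT (by simp [h1])⟩
  have hopen : IsOpen (univ.pi fun _ : ι => Ioo (0 : ℝ) 1) :=
    isOpen_set_pi finite_univ fun _ _ => isOpen_Ioo
  have hcont : Continuous fun s : ℝ => x + s • d := by fun_prop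
  have hev : ∀ᶠ s in 𝓝[>] t, s ∈ T ∧ t < s := by
    refine Filter.Eventually.and (nhdsWithin_le_nhds ?_) self_mem_nhdsWithin
    filter_upwards [hcont.continuousAt.preimage_mem_nhds (hopen.mem_nhds hmem)] with s hs
    exact ⟨fun i => (hs i (mem_univ i)).1.le, fun i => (hs i (mem_univ i)).2.le⟩
  obtain ⟨s, hsT, hts⟩ := hev.exists
  exact (hmax hsT).not_gt hts

theorem mulVec_image_Icc_subset_iUnion_faces {ι m : Type*} [Fintype ι] {B : Matrix m ι ℝ}
    {d : ι → ℝ} (hd : d ≠ 0) (hBd : B *ᵥ d = 0) :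
    B.mulVec '' Icc 0 1 ⊆
      ⋃ k, B.mulVec '' (Icc 0 1 ∩ {x | x k = 0}) ∪ B.mulVec '' (Icc 0 1 ∩ {x | x k = 1}) := by
  rintro _ ⟨x, hx, rfl⟩
  obtain ⟨t, k, hface, hk⟩ := exists_add_smul_mem_face hx hd
  have hBx : B *ᵥ (x + t • d) = B *ᵥ x := by
    rw [Matrix.mulVec_add, Matrix.mulVec_smul, hBd, smul_zero, add_zero]
  refine mem_iUnion.mpr ⟨k, ?_⟩
  rcases hk with hk | hk
  · exact Or.inl ⟨x + t • d, ⟨hface, hk⟩, hBx⟩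
  · exact Or.inr ⟨x + t • d, ⟨hface, hk⟩, hBx⟩

theorem mulVec_insertNth {m : Type*} [Fintype m] {n : ℕ} (B : Matrix m (Fin (n + 1)) ℝ)
    (k : Fin (n + 1)) (c : ℝ) (w : Fin n → ℝ) :
    B *ᵥ k.insertNth c w = c • B.col k + B.submatrix id k.succAbove *ᵥ w := by
  ext i
  simp [Matrix.mulVec, dotProduct, Fin.sum_univ_succAbove _ k, mul_comm]

theorem volume_mulVec_image_face_le {n : ℕ} (B : Matrix (Fin n) (Fin (n + 1)) ℝ)
    (k : Fin (n + 1)) (c : ℝ) :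
    volume (B.mulVec '' (Icc 0 1 ∩ {x | x k = c})) ≤
      ENNReal.ofReal |(B.submatrix id k.succAbove).det| := by
  set M := B.submatrix id k.succAbove
  have hsub : B.mulVec '' (Icc 0 1 ∩ {x | x k = c}) ⊆
      (c • B.col k + ·) '' (Matrix.toLin' M '' Icc 0 1) := by
    rintro _ ⟨x, ⟨hx, rfl⟩, rfl⟩
    refine ⟨M *ᵥ k.removeNth x, ⟨k.removeNth x, ⟨fun j => hx.1 _, fun j => hx.2 _⟩, rfl⟩, ?_⟩
    conv_rhs => rw [← Fin.insertNth_self_removeNth k x]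
    rw [mulVec_insertNth]
  calc _ ≤ volume ((c • B.col k + ·) '' (Matrix.toLin' M '' Icc 0 1)) :=
        measure_mono hsub
    _ = ENNReal.ofReal |M.det| := by
      simp [Measure.addHaar_image_linearMap, LinearMap.det_toLin', Real.volume_Icc_pi]

theorem abs_det_submatrix_succAbove {n : ℕ} {A : Matrix (Fin (n + 1)) (Fin (n + 1)) ℝ}
    (hA : IsUnit A.det) (i j : Fin (n + 1)) :
    |(A.submatrix j.succAbove i.succAbove).det| = |A.det| * |A⁻¹ i j| := by
  have hadj : A.adjugate i j = A.det * A⁻¹ i j := by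
    rw [Matrix.nonsing_inv_apply A hA, Matrix.smul_apply, smul_eq_mul, ← mul_assoc,
      IsUnit.mul_val_inv, one_mul]
  have := congrArg abs (A.adjugate_fin_succ_eq_det_submatrix i j)
  rw [hadj, abs_mul, abs_mul, abs_pow, abs_neg, abs_one, one_pow, one_mul] at this
  exact this.symm

theorem volume_mulVec_image_Icc_le {n : ℕ} {A : Matrix (Fin (n + 1)) (Fin (n + 1)) ℝ}
    (hA : IsUnit A.det) :
    volume ((A.submatrix Fin.castSucc id).mulVec '' Icc 0 1) ≤
      ENNReal.ofReal (2 * |A.det| * ∑ k, |A⁻¹ k (Fin.last n)|) := by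
  set B := A.submatrix Fin.castSucc id
  set d := A⁻¹ *ᵥ Pi.single (Fin.last n) 1
  have hAd : A *ᵥ d = Pi.single (Fin.last n) 1 := by
    rw [Matrix.mulVec_mulVec, Matrix.mul_nonsing_inv A hA, Matrix.one_mulVec]
  have hd : d ≠ 0 := fun h => by simpa [h] using congrFun hAd (Fin.last n)
  have hBd : B *ᵥ d = 0 := by
    ext j
    change (A *ᵥ d) j.castSucc = 0
    simp [hAd, Fin.castSucc_ne_last]
  have hface : ∀ k c, volume (B.mulVec '' (Icc 0 1 ∩ {x | x k = c})) ≤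
      ENNReal.ofReal (|A.det| * |A⁻¹ k (Fin.last n)|) := fun k c => by
    rw [← abs_det_submatrix_succAbove hA, Fin.succAbove_last]
    exact volume_mulVec_image_face_le B k c
  calc volume (B.mulVec '' Icc 0 1)
      ≤ ∑ k, (volume (B.mulVec '' (Icc 0 1 ∩ {x | x k = 0})) +
          volume (B.mulVec '' (Icc 0 1 ∩ {x | x k = 1}))) :=
        (measure_mono (mulVec_image_Icc_subset_iUnion_faces hd hBd)).trans
          ((measure_iUnion_fintype_le _ _).trans
            (Finset.sum_le_sum fun k _ => measure_union_le _ _))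
    _ ≤ ∑ k, ENNReal.ofReal (2 * |A.det| * |A⁻¹ k (Fin.last n)|) := by
      refine Finset.sum_le_sum fun k _ => ?_
      rw [mul_assoc, two_mul, ENNReal.ofReal_add (by positivity) (by positivity)]
      exact add_le_add (hface k 0) (hface k 1)
    _ = ENNReal.ofReal (2 * |A.det| * ∑ k, |A⁻¹ k (Fin.last n)|) := by
      rw [Finset.mul_sum, ENNReal.ofReal_sum_of_nonneg fun k _ => by positivity]

theorem measurableSet_strip {α : Type*} [MeasurableSpace α] {g : α → ℝ} (hg : Measurable g)
    {K : Set α} (hK : MeasurableSet K) (ε : ℝ) :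
    MeasurableSet {p : ℝ × α | p.2 ∈ K ∧ p.1 ∈ Icc (g p.2) (g p.2 + ε)} :=
  (measurable_snd hK).inter ((measurableSet_le (hg.comp measurable_snd) measurable_fst).inter
    (measurableSet_le measurable_fst ((hg.add_const ε).comp measurable_snd)))

theorem prod_apply_strip {α : Type*} [MeasurableSpace α] {μ : Measure α} [SFinite μ]
    {g : α → ℝ} (hg : Measurable g) {K : Set α} (hK : MeasurableSet K) (ε : ℝ) :
    (volume.prod μ) {p : ℝ × α | p.2 ∈ K ∧ p.1 ∈ Icc (g p.2) (g p.2 + ε)} =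
      ENNReal.ofReal ε * μ K := by
  have hslice : ∀ w, volume ((fun z => (z, w)) ⁻¹'
      {p : ℝ × α | p.2 ∈ K ∧ p.1 ∈ Icc (g p.2) (g p.2 + ε)}) =
        K.indicator (fun _ => ENNReal.ofReal ε) w := by
    intro w
    by_cases hw : w ∈ K
    · have : (fun z => (z, w)) ⁻¹' {p : ℝ × α | p.2 ∈ K ∧ p.1 ∈ Icc (g p.2) (g p.2 + ε)} =
          Icc (g w) (g w + ε) := by
        ext; simp [hw]
      rw [indicator_of_mem hw, this, Real.volume_Icc, add_sub_cancel_left]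
    · simp [hw, preimage]
  rw [Measure.prod_apply_symm (measurableSet_strip hg hK ε), funext hslice,
    lintegral_indicator_const hK]

theorem volume_strip {n : ℕ} {g : (Fin n → ℝ) → ℝ} (hg : Measurable g)
    {K : Set (Fin n → ℝ)} (hK : MeasurableSet K) (ε : ℝ) :
    volume {y : Fin (n + 1) → ℝ | (fun j => y j.castSucc) ∈ K ∧
        y (Fin.last n) ∈ Icc (g fun j => y j.castSucc) (g (fun j => y j.castSucc) + ε)} =
      ENNReal.ofReal ε * volume K := by
  have he := volume_preserving_piFinSuccAbove (fun _ : Fin (n + 1) => ℝ) (Fin.last n)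
  rw [← prod_apply_strip hg hK ε, ← Measure.volume_eq_prod,
    ← he.measure_preimage (measurableSet_strip hg hK ε).nullMeasurableSet]
  simp only [mem_Icc, MeasurableEquiv.piFinSuccAbove_apply, Fin.insertNthEquiv_last,
    preimage_ofPred_eq, Fin.snocEquiv_symm_apply]
  rfl
section Delta

variable {n : ℕ}

theorem deltaHat_nonneg (S : Set (EuclideanSpace ℝ (Fin n))) (v : EuclideanSpace ℝ (Fin n)) :
    0 ≤ deltaHat S v :=
  div_nonneg (norm_nonneg _) (norm_nonneg _)

theorem deltaHat_mul_norm (S : Set (EuclideanSpace ℝ (Fin n))) (v : EuclideanSpace ℝ (Fin n)) :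
    deltaHat S v * ‖v‖ =
      ‖(Submodule.orthogonalProjectionOnto ((Submodule.span ℝ S)ᗮ) v :
        EuclideanSpace ℝ (Fin n))‖ := by
  rcases eq_or_ne v 0 with rfl | hv
  · simp
  · exact div_mul_cancel₀ _ (norm_ne_zero_iff.mpr hv)

theorem abs_mul_deltaHat_mul_norm_le {ι : Type*} [Fintype ι] (a : ι → EuclideanSpace ℝ (Fin n))
    (c : ι → ℝ) (k : ι) :
    |c k| * (deltaHat (a '' {i | i ≠ k}) (a k) * ‖a k‖) ≤ ‖∑ i, c i • a i‖ := by
  set P := Submodule.orthogonalProjectionOnto (Submodule.span ℝ (a '' {i | i ≠ k}))ᗮ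
  have hP : P (∑ i, c i • a i) = c k • P (a k) := by
    rw [map_sum, Finset.sum_eq_single k]
    · exact P.map_smul _ _
    · intro i _ hik
      rw [P.map_smul, Submodule.orthogonalProjectionOnto_eq_zero_iff.mpr, smul_zero]
      exact Submodule.le_orthogonal_orthogonal _ (Submodule.subset_span (mem_image_of_mem a hik))
    · exact fun hk => absurd (Finset.mem_univ k) hk
  calc |c k| * (deltaHat (a '' {i | i ≠ k}) (a k) * ‖a k‖)
      = ‖P (∑ i, c i • a i)‖ := by
        rw [deltaHat_mul_norm, hP, norm_smul, Real.norm_eq_abs, Submodule.coe_norm]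
    _ ≤ ‖∑ i, c i • a i‖ := Submodule.norm_orthogonalProjectionOnto_apply_le _ _

theorem deltaHat_pos {ι : Type*} {a : ι → EuclideanSpace ℝ (Fin n)} (ha : LinearIndependent ℝ a)
    (k : ι) : 0 < deltaHat (a '' {i | i ≠ k}) (a k) := by
  have hP :
      Submodule.orthogonalProjectionOnto (Submodule.span ℝ (a '' {i | i ≠ k}))ᗮ (a k) ≠ 0 := by
    rw [Ne, Submodule.orthogonalProjectionOnto_eq_zero_iff, Submodule.orthogonal_orthogonal]
    exact ha.notMem_span_image (by simp)
  exact div_pos (norm_pos_iff.mpr (by exact_mod_cast hP)) (norm_pos_iff.mpr (ha.ne_zero k))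

theorem deltaVec_mul_iInf_norm_pos {a : Fin (n + 1) → EuclideanSpace ℝ (Fin (n + 1))}
    (ha : LinearIndependent ℝ a) : 0 < deltaVec a * ⨅ k, ‖a k‖ := by
  obtain ⟨k₁, hk₁⟩ := exists_eq_ciInf_of_finite (f := fun k => deltaHat (a '' {i | i ≠ k}) (a k))
  obtain ⟨k₂, hk₂⟩ := exists_eq_ciInf_of_finite (f := fun k => ‖a k‖)
  rw [deltaVec, ← hk₁, ← hk₂]
  exact mul_pos (deltaHat_pos ha k₁) (norm_pos_iff.mpr (ha.ne_zero k₂))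

theorem abs_mul_deltaVec_mul_iInf_norm_le (a : Fin n → EuclideanSpace ℝ (Fin n)) (c : Fin n → ℝ)
    (k : Fin n) : |c k| * (deltaVec a * ⨅ k, ‖a k‖) ≤ ‖∑ i, c i • a i‖ := by
  refine le_trans (mul_le_mul_of_nonneg_left ?_ (abs_nonneg _))
    (abs_mul_deltaHat_mul_norm_le a c k)
  exact mul_le_mul (ciInf_le (finite_range _).bddBelow k) (ciInf_le (finite_range _).bddBelow k)
    (Real.iInf_nonneg fun _ => norm_nonneg _) (deltaHat_nonneg _ _)

end Delta

theorem linearIndependent_toE_col {n : ℕ} {A : Matrix (Fin n) (Fin n) ℝ} (hA : IsUnit A.det) :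
    LinearIndependent ℝ fun k => toE fun i => A i k :=
  (Matrix.linearIndependent_cols_iff_isUnit.mpr ((A.isUnit_iff_isUnit_det).mpr hA)).map'
    (WithLp.linearEquiv 2 ℝ (Fin n → ℝ)).symm.toLinearMap (LinearEquiv.ker _)

theorem sum_smul_toE_col {n : ℕ} (A : Matrix (Fin n) (Fin n) ℝ) (c : Fin n → ℝ) :
    ∑ k, c k • (toE fun i => A i k) = toE (A *ᵥ c) := by
  ext i
  simp [toE, Matrix.mulVec, dotProduct, mul_comm]

theorem sum_abs_inv_le {n : ℕ} {A : Matrix (Fin (n + 1)) (Fin (n + 1)) ℝ} (hA : IsUnit A.det)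
    (j : Fin (n + 1)) :
    ∑ k, |A⁻¹ k j| ≤
      (n + 1) / (deltaVec (fun k => toE fun i => A i k) * ⨅ k, ‖toE fun i => A i k‖) := by
  have hD := deltaVec_mul_iInf_norm_pos (linearIndependent_toE_col hA)
  have hcol : A *ᵥ (fun k => A⁻¹ k j) = Pi.single j 1 := by
    change A *ᵥ A⁻¹.col j = _
    rw [← Matrix.mulVec_single_one, Matrix.mulVec_mulVec, Matrix.mul_nonsing_inv A hA,
      Matrix.one_mulVec]
  have hk : ∀ k, |A⁻¹ k j| ≤
      1 / (deltaVec (fun k => toE fun i => A i k) * ⨅ k, ‖toE fun i => A i k‖) := fun k => by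
    rw [le_div_iff₀ hD]
    have hnorm : ‖toE (Pi.single j (1 : ℝ))‖ = 1 := by
      rw [toE, PiLp.toLp_single, PiLp.norm_single, norm_one]
    simpa only [sum_smul_toE_col, hcol, hnorm, one_mul] using
      abs_mul_deltaVec_mul_iInf_norm_le (fun k => toE fun i => A i k) (fun k => A⁻¹ k j) k
  calc ∑ k, |A⁻¹ k j| ≤ ∑ _k : Fin (n + 1), 1 / _ := Finset.sum_le_sum fun k _ => hk k
    _ = _ := by simp [div_eq_mul_inv]

theorem volume_mulVec_preimage_strip_inter_Icc_le {n : ℕ}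
    {A : Matrix (Fin (n + 1)) (Fin (n + 1)) ℝ} (hA : IsUnit A.det) {g : (Fin n → ℝ) → ℝ}
    (hg : Measurable g) {ε : ℝ} (hε : 0 ≤ ε) :
    volume ({x | (A *ᵥ x) (Fin.last n) ∈
        Icc (g fun j => (A *ᵥ x) j.castSucc) (g (fun j => (A *ᵥ x) j.castSucc) + ε)} ∩ Icc 0 1) ≤
      ENNReal.ofReal (2 * ε * ∑ k, |A⁻¹ k (Fin.last n)|) := by
  set S : Set (Fin (n + 1) → ℝ) :=
    {y | y (Fin.last n) ∈ Icc (g fun j => y j.castSucc) (g (fun j => y j.castSucc) + ε)}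
  set K := (A.submatrix Fin.castSucc id).mulVec '' Icc 0 1
  have hdet : A.det ≠ 0 := hA.ne_zero
  have hinj : Function.Injective (Matrix.toLin' A) :=
    Matrix.mulVec_injective_iff_isUnit.mpr ((A.isUnit_iff_isUnit_det).mpr hA)
  have hK : MeasurableSet K := (isCompact_Icc.image
    (Matrix.toLin' (A.submatrix Fin.castSucc id)).continuous_of_finiteDimensional).measurableSet
  have hsub : S ∩ Matrix.toLin' A '' Icc 0 1 ⊆
      {y | (fun j => y j.castSucc) ∈ K ∧ y (Fin.last n) ∈
        Icc (g fun j => y j.castSucc) (g (fun j => y j.castSucc) + ε)} := by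
    rintro _ ⟨hS, x, hx, rfl⟩
    exact ⟨⟨x, hx, rfl⟩, hS⟩
  calc volume (Matrix.toLin' A ⁻¹' S ∩ Icc 0 1)
      = ENNReal.ofReal |A.det⁻¹| * volume (S ∩ Matrix.toLin' A '' Icc 0 1) := by
        rw [← LinearMap.det_toLin' A, ← Measure.addHaar_preimage_linearMap _
          (by rwa [LinearMap.det_toLin']), preimage_inter, hinj.preimage_image]
    _ ≤ ENNReal.ofReal |A.det⁻¹| * (ENNReal.ofReal ε *
          ENNReal.ofReal (2 * |A.det| * ∑ k, |A⁻¹ k (Fin.last n)|)) := by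
        gcongr
        exact (measure_mono hsub).trans ((volume_strip hg hK ε).trans_le
          (by gcongr; exact volume_mulVec_image_Icc_le hA))
    _ = ENNReal.ofReal (2 * ε * ∑ k, |A⁻¹ k (Fin.last n)|) := by
        rw [← ENNReal.ofReal_mul hε, ← ENNReal.ofReal_mul (abs_nonneg _)]
        congr 1
        rw [abs_inv]
        field_simp

theorem map_eq_volume_restrict_pi {ι Ω : Type*} [Fintype ι] [MeasurableSpace Ω] {μ : Measure Ω}
    [IsProbabilityMeasure μ] {X : ι → Ω → ℝ} (hXae : ∀ i, AEMeasurable (X i) μ)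
    (hXindep : iIndepFun X μ) {s : ι → Set ℝ} (hXlaw : ∀ i, μ.map (X i) = volume.restrict (s i)) :
    μ.map (fun ω i => X i ω) = volume.restrict (univ.pi s) := by
  rw [(iIndepFun_iff_map_fun_eq_pi_map hXae).mp hXindep, volume_pi, Measure.restrict_pi_pi]
  simp_rw [hXlaw]

theorem stmt8_general {n : ℕ} {Ω : Type*} [MeasurableSpace Ω] (μ : Measure Ω)
    [IsProbabilityMeasure μ]
    (X : Fin (n+1) → Ω → ℝ)
    (hXindep : iIndepFun X μ)
    (hXlaw : ∀ i, μ.map (X i) = volume.restrict (Set.Ioc (0:ℝ) 1))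
    (A : Matrix (Fin (n+1)) (Fin (n+1)) ℝ) (hA : IsUnit A.det)
    (g : (Fin n → ℝ) → ℝ) (hg : Measurable g) (ε : ℝ) (hε : 0 < ε) :
    μ {ω | A.mulVec (fun i => X i ω) (Fin.last n) ∈
        Set.Icc (g fun j => A.mulVec (fun i => X i ω) j.castSucc)
          (g (fun j => A.mulVec (fun i => X i ω) j.castSucc) + ε)} ≤
      ENNReal.ofReal (2 * ((n : ℝ) + 1) * ε /
        (deltaVec (fun k => toE fun i => A i k) * ⨅ k, ‖toE fun i => A i k‖)) := by
  have hXae : ∀ i, AEMeasurable (X i) μ := fun i => .of_map_ne_zero (by simp [hXlaw i])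
  set S : Set (Fin (n + 1) → ℝ) := {x | (A *ᵥ x) (Fin.last n) ∈
    Icc (g fun j => (A *ᵥ x) j.castSucc) (g (fun j => (A *ᵥ x) j.castSucc) + ε)}
  have hS : MeasurableSet S := by
    have hAm : Measurable (A *ᵥ ·) :=
      (Matrix.toLin' A).continuous_of_finiteDimensional.measurable
    have hY : Measurable fun x => g fun j => (A *ᵥ x) j.castSucc :=
      hg.comp (measurable_pi_lambda _ fun j => (measurable_pi_apply _).comp hAm)
    exact (measurableSet_le hY ((measurable_pi_apply _).comp hAm)).inter
      (measurableSet_le ((measurable_pi_apply _).comp hAm) (hY.add_const ε))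
  calc μ ((fun ω i => X i ω) ⁻¹' S)
      = volume (S ∩ univ.pi fun _ => Ioc 0 1) := by
        rw [← Measure.map_apply_of_aemeasurable (aemeasurable_pi_lambda _ hXae) hS,
          map_eq_volume_restrict_pi hXae hXindep hXlaw, Measure.restrict_apply hS]
    _ ≤ volume (S ∩ Icc 0 1) :=
        measure_mono (inter_subset_inter_right _ fun x hx =>
          ⟨fun i => (hx i (mem_univ i)).1.le, fun i => (hx i (mem_univ i)).2⟩)
    _ ≤ ENNReal.ofReal (2 * ε * ∑ k, |A⁻¹ k (Fin.last n)|) :=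
        volume_mulVec_preimage_strip_inter_Icc_le hA hg hε.le
    _ ≤ _ := by
        rw [mul_right_comm (2 : ℝ) ((n : ℝ) + 1) ε, mul_div_assoc]
        gcongr
        exact sum_abs_inv_le hA _

/-- Let X₁, …, X_{n+1} be independent random variables uniform on (0,1],
let A ∈ ℝ^{(n+1)×(n+1)} be invertible with columns a₁, …, a_{n+1}, let
(Y₁, …, Yₙ, Z)ᵀ = A·(X₁, …, X_{n+1})ᵀ, let g be measurable and ε > 0. Then
P[Z ∈ [g(Y), g(Y)+ε]] ≤ 2(n+1)ε / (δ(a₁,…,a_{n+1}) · min_k ‖a_k‖). -/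
theorem stmt8 {n : ℕ} {Ω : Type*} [MeasurableSpace Ω] (μ : Measure Ω)
    [IsProbabilityMeasure μ]
    (X : Fin (n+1) → Ω → ℝ) (hXmeas : ∀ i, Measurable (X i))
    (hXindep : iIndepFun X μ)
    (hXlaw : ∀ i, μ.map (X i) = volume.restrict (Set.Ioc (0:ℝ) 1))
    (A : Matrix (Fin (n+1)) (Fin (n+1)) ℝ) (hA : IsUnit A.det)
    (g : (Fin n → ℝ) → ℝ) (hg : Measurable g) (ε : ℝ) (hε : 0 < ε) :
    μ {ω | A.mulVec (fun i => X i ω) (Fin.last n) ∈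
        Set.Icc (g fun j => A.mulVec (fun i => X i ω) j.castSucc)
          (g (fun j => A.mulVec (fun i => X i ω) j.castSucc) + ε)} ≤
      ENNReal.ofReal (2 * ((n : ℝ) + 1) * ε /
        (deltaVec (fun k => toE fun i => A i k) * ⨅ k, ‖toE fun i => A i k‖)) :=
  stmt8_general μ X hXindep hXlaw A hA g hg ε hε
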